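/- The configuration of n charges at equilibrium on the needle [0,1] is the unique minimizer of ω: a point a = (a_2,…,a_{n−1}) ∈ U_{n−2} satisfies ω(a) ≤ ω(b) for all b ∈ U_{n−2} if and only if (0, a_2, …, a_{n−1}, 1) is a configuration of n charges at equilibrium, and there is exactly one such point a. -/

import Mathlib

/-- Extend a point `(a_2, …, a_{n-1}) ∈ ℝ^{n-2}` to a full configuration on the needle,
with `a_1 = 0` and `a_n = 1` (0-indexed: position `0` is `0`, position `n-1` is `1`). -/
def extCfg (n : ℕ) (a : Fin (n - 2) → ℝ) : Fin n → ℝ := fun i =>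
  if h0 : i.val = 0 then 0
  else if h1 : i.val = n - 1 then 1
  else a ⟨i.val - 1, by have := i.isLt; omega⟩

/-- The open simplex `U_{n-2} = {0 < a_2 < ⋯ < a_{n-1} < 1} ⊆ ℝ^{n-2}`. -/
def needleU (n : ℕ) : Set (Fin (n - 2) → ℝ) :=
  {a | StrictMono (extCfg n a)}

/-- The interaction energy `ω(a_2,…,a_{n-1}) = ∑_{1 ≤ j < k ≤ n} 1/(a_k - a_j)`
(with `a_1 = 0`, `a_n = 1`). -/
noncomputable def needleOmega (n : ℕ) (a : Fin (n - 2) → ℝ) : ℝ :=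
  ∑ p ∈ Finset.univ.filter (fun p : Fin n × Fin n => p.1 < p.2),
    1 / (extCfg n a p.2 - extCfg n a p.1)


/-- For `n ≥ 3`, `x : Fin n → ℝ` is a configuration of `n` charges at equilibrium on the
needle `[0,1]`: a strictly increasing tuple with `x 0 = 0`, `x (n-1) = 1` such that each
interior charge feels balanced forces. -/
def needleEquilibrium (n : ℕ) (x : Fin n → ℝ) : Prop :=
  StrictMono x ∧ (∀ i : Fin n, i.val = 0 → x i = 0) ∧
    (∀ i : Fin n, i.val = n - 1 → x i = 1) ∧
    ∀ i : Fin n, 1 ≤ i.val → i.val ≤ n - 2 →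
      (∑ j ∈ Finset.univ.filter (fun j => j < i), 1 / (x i - x j) ^ 2) =
        ∑ j ∈ Finset.univ.filter (fun j => i < j), 1 / (x i - x j) ^ 2

/-!
Write `x = extCfg n a`, so that `ω(a)` is the pair energy `∑_{j<k} 1/(x_k - x_j)` of `x`.
Since `r ↦ 1/r` is strictly convex on `(0, ∞)` and `x` depends affinely on `a`, `ω` is convex on
the convex open set `U`; it is strictly convex because the pair `(0, i+1)` sees the coordinate
`a_i` alone. Hence `ω` has at most one minimizer. One exists because `ω` bounds every
`1/(x_k - x_j)`: a sublevel set of `ω` lies in a compact set of configurations whose gaps are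
bounded below. Along `a + t e_i` the derivative of `ω` is minus the net Coulomb force on the
charge `x_{i+1}`, so at a minimizer all interior forces vanish. Conversely, summing the tangent
bound `1/Y ≥ 1/X - (Y - X)/X²` over all pairs gives `ω(b) ≥ ω(a) - ∑_i (y_i - x_i) F_i(x)`
with `y = extCfg n b`, and at an equilibrium every term of the last sum vanishes, since
`y_i = x_i` at the two ends and the force `F_i(x)` vanishes inside.
-/

open Finset

theorem strictConvexOn_inv : StrictConvexOn ℝ (Set.Ioi 0) fun r : ℝ => r⁻¹ := by
  simpa only [zpow_neg_one] using strictConvexOn_zpow (m := -1) (by norm_num) (by norm_num)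

theorem isOpen_setOf_strictMono {ι α : Type*} [Finite ι] [Preorder ι] [TopologicalSpace α]
    [LinearOrder α] [OrderClosedTopology α] : IsOpen {x : ι → α | StrictMono x} := by
  simp only [StrictMono, Set.ofPred_forall]
  exact isOpen_iInter_of_finite fun j => isOpen_iInter_of_finite fun k =>
    isOpen_iInter_of_finite fun _ => isOpen_lt (continuous_apply j) (continuous_apply k)

section PairEnergy

variable {ι : Type*} [Fintype ι] [LinearOrder ι]

noncomputable def pairEnergy (x : ι → ℝ) : ℝ :=
  ∑ p ∈ univ.filter (fun p : ι × ι => p.1 < p.2), 1 / (x p.2 - x p.1)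

noncomputable def coulombForce (x : ι → ℝ) (i : ι) : ℝ :=
  ∑ j ∈ univ.filter (· < i), 1 / (x i - x j) ^ 2 - ∑ j ∈ univ.filter (i < ·), 1 / (x i - x j) ^ 2

theorem pairEnergy_nonneg {x : ι → ℝ} (hx : StrictMono x) : 0 ≤ pairEnergy x :=
  sum_nonneg fun _ hp => one_div_nonneg.2 (sub_pos.2 (hx (mem_filter.1 hp).2)).le

theorem one_div_le_pairEnergy {x : ι → ℝ} (hx : StrictMono x) {j k : ι} (hjk : j < k) :
    1 / (x k - x j) ≤ pairEnergy x :=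
  single_le_sum (f := fun p : ι × ι => 1 / (x p.2 - x p.1))
    (fun _ hp => one_div_nonneg.2 (sub_pos.2 (hx (mem_filter.1 hp).2)).le)
    (mem_filter.2 ⟨mem_univ (j, k), hjk⟩)

theorem pairEnergy_smul_add_smul_lt {x y : ι → ℝ} (hx : StrictMono x) (hy : StrictMono y)
    {j k : ι} (hjk : j < k) (hne : x k - x j ≠ y k - y j) {t s : ℝ} (ht : 0 < t) (hs : 0 < s)
    (hts : t + s = 1) : pairEnergy (t • x + s • y) < t * pairEnergy x + s * pairEnergy y := by
  have hgap : ∀ p : ι × ι, (t • x + s • y) p.2 - (t • x + s • y) p.1 =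
      t • (x p.2 - x p.1) + s • (y p.2 - y p.1) := fun p => by
    simp only [Pi.add_apply, Pi.smul_apply, smul_eq_mul]; ring
  simp only [pairEnergy, mul_sum, ← sum_add_distrib, hgap, one_div]
  refine sum_lt_sum (fun p hp => ?_) ⟨(j, k), mem_filter.2 ⟨mem_univ _, hjk⟩, ?_⟩
  · have hp := (mem_filter.1 hp).2
    exact strictConvexOn_inv.convexOn.2 (sub_pos.2 (hx hp)) (sub_pos.2 (hy hp)) ht.le hs.le hts
  · exact strictConvexOn_inv.2 (sub_pos.2 (hx hjk)) (sub_pos.2 (hy hjk)) hne ht hs hts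

theorem sum_pairs_sub_mul (v : ι → ℝ) (w : ι → ι → ℝ) :
    ∑ p ∈ univ.filter (fun p : ι × ι => p.1 < p.2), (v p.2 - v p.1) * w p.1 p.2 =
      ∑ i, v i * (∑ j ∈ univ.filter (· < i), w j i - ∑ k ∈ univ.filter (i < ·), w i k) := by
  simp only [sub_mul, sum_sub_distrib, mul_sub, mul_sum, sum_filter, Fintype.sum_prod_type,
    mul_ite, mul_zero]
  rw [sum_comm (f := fun j k => if j < k then v k * w j k else 0)]

theorem sum_pairs_sub_div_sq (x v : ι → ℝ) :
    ∑ p ∈ univ.filter (fun p : ι × ι => p.1 < p.2), (v p.2 - v p.1) / (x p.2 - x p.1) ^ 2 =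
      ∑ i, v i * coulombForce x i := by
  simp only [div_eq_mul_inv]
  refine (sum_pairs_sub_mul v fun j k => ((x k - x j) ^ 2)⁻¹).trans (sum_congr rfl fun i _ => ?_)
  simp only [coulombForce, one_div]
  congr 2
  exact sum_congr rfl fun k _ => by rw [sub_sq_comm]

theorem inv_sub_div_sq_le_inv {x y : ℝ} (hy : 0 < y) : x⁻¹ - (y - x) / x ^ 2 ≤ y⁻¹ := by
  rcases eq_or_ne x 0 with rfl | hx
  · simpa using hy.le
  have hgap : y⁻¹ - (x⁻¹ - (y - x) / x ^ 2) = (y - x) ^ 2 / (x ^ 2 * y) := by field_simp; ring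
  rw [← sub_nonneg, hgap]
  positivity

theorem pairEnergy_sub_sum_mul_coulombForce_le {x y : ι → ℝ} (hy : StrictMono y) :
    pairEnergy x - ∑ i, (y i - x i) * coulombForce x i ≤ pairEnergy y := by
  rw [← sum_pairs_sub_div_sq, pairEnergy, pairEnergy, ← sum_sub_distrib]
  refine sum_le_sum fun p hp => ?_
  have hpos : 0 < y p.2 - y p.1 := sub_pos.2 (hy (mem_filter.1 hp).2)
  simpa only [one_div, sub_sub_sub_comm] using inv_sub_div_sq_le_inv (x := x p.2 - x p.1) hpos

theorem hasDerivAt_pairEnergy_add_smul {x : ι → ℝ} (hx : StrictMono x) (v : ι → ℝ) :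
    HasDerivAt (fun t : ℝ => pairEnergy (x + t • v)) (-∑ i, v i * coulombForce x i) 0 := by
  rw [← sum_pairs_sub_div_sq, ← sum_neg_distrib]
  refine HasDerivAt.fun_sum fun p hp => ?_
  have hgap : x p.2 - x p.1 ≠ 0 := (sub_pos.2 (hx (mem_filter.1 hp).2)).ne'
  have hline : HasDerivAt (fun t : ℝ => (x + t • v) p.2 - (x + t • v) p.1)
      (v p.2 - v p.1) 0 := by
    simp only [Pi.add_apply, Pi.smul_apply, smul_eq_mul]
    simpa using (((hasDerivAt_id (0 : ℝ)).mul_const (v p.2)).const_add (x p.2)).fun_sub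
      (((hasDerivAt_id (0 : ℝ)).mul_const (v p.1)).const_add (x p.1))
  simpa [one_div, neg_div', neg_sub] using hline.fun_inv (by simpa using hgap)

end PairEnergy

section Needle

variable {n : ℕ}

theorem needleOmega_eq_pairEnergy (a : Fin (n - 2) → ℝ) :
    needleOmega n a = pairEnergy (extCfg n a) := rfl

theorem extCfg_of_val_eq_zero (a : Fin (n - 2) → ℝ) {i : Fin n} (hi : i.val = 0) :
    extCfg n a i = 0 := by
  simp [extCfg, hi]

theorem extCfg_of_val_eq_sub_one (hn : 2 ≤ n) (a : Fin (n - 2) → ℝ) {i : Fin n}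
    (hi : i.val = n - 1) : extCfg n a i = 1 := by
  simp [extCfg, hi, show n - 1 ≠ 0 by omega]

theorem extCfg_succ (a : Fin (n - 2) → ℝ) (i : Fin (n - 2)) :
    extCfg n a ⟨i.val + 1, by omega⟩ = a i := by
  simp [extCfg, show i.val + 1 ≠ n - 1 by omega]

theorem extCfg_smul_add_smul (a b : Fin (n - 2) → ℝ) {t s : ℝ} (hts : t + s = 1) :
    extCfg n (t • a + s • b) = t • extCfg n a + s • extCfg n b := by
  funext i
  simp only [extCfg, Pi.add_apply, Pi.smul_apply, smul_eq_mul]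
  split_ifs <;> simp [hts]

theorem extCfg_add_smul_single (a : Fin (n - 2) → ℝ) (i : Fin (n - 2)) (t : ℝ) :
    extCfg n (a + t • Pi.single i 1) =
      extCfg n a + t • Pi.single (⟨i.val + 1, by omega⟩ : Fin n) 1 := by
  funext j
  simp only [extCfg, Pi.add_apply, Pi.smul_apply, smul_eq_mul, Pi.single_apply, Fin.ext_iff]
  split_ifs <;> first | omega | simp

theorem continuous_extCfg : Continuous (extCfg n) := by
  refine continuous_pi fun i => ?_
  unfold extCfg
  split_ifs
  exacts [continuous_const, continuous_const, continuous_apply _]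

theorem isOpen_needleU : IsOpen (needleU n) :=
  isOpen_setOf_strictMono.preimage continuous_extCfg

theorem convex_needleU : Convex ℝ (needleU n) := by
  intro a ha b hb t s ht hs hts j k hjk
  rw [extCfg_smul_add_smul a b hts]
  simp only [Pi.add_apply, Pi.smul_apply, smul_eq_mul]
  have hx := sub_pos.2 (ha hjk)
  have hy := sub_pos.2 (hb hjk)
  rcases ht.eq_or_lt with rfl | ht
  · nlinarith
  · nlinarith [mul_pos ht hx, mul_nonneg hs hy.le]

theorem strictConvexOn_needleOmega : StrictConvexOn ℝ (needleU n) (needleOmega n) := by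
  refine ⟨convex_needleU, fun a ha b hb hab t s ht hs hts => ?_⟩
  obtain ⟨i, hi⟩ := Function.ne_iff.1 hab
  simp only [needleOmega_eq_pairEnergy, extCfg_smul_add_smul a b hts, smul_eq_mul]
  refine pairEnergy_smul_add_smul_lt ha hb (j := ⟨0, by have := i.isLt; omega⟩)
    (k := ⟨i.val + 1, by omega⟩) (Fin.mk_lt_mk.2 i.val.succ_pos) ?_ ht hs hts
  simpa [extCfg_succ, extCfg_of_val_eq_zero] using hi

theorem needleEquilibrium_extCfg_iff (hn : 2 ≤ n) {a : Fin (n - 2) → ℝ} (ha : a ∈ needleU n) :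
    needleEquilibrium n (extCfg n a) ↔
      ∀ i : Fin n, 1 ≤ i.val → i.val ≤ n - 2 → coulombForce (extCfg n a) i = 0 := by
  simp only [needleEquilibrium, coulombForce, sub_eq_zero]
  exact ⟨fun h => h.2.2.2, fun h => ⟨ha, fun _ => extCfg_of_val_eq_zero a,
    fun _ => extCfg_of_val_eq_sub_one hn a, h⟩⟩

theorem isMinOn_needleOmega_of_equilibrium (hn : 2 ≤ n) {a : Fin (n - 2) → ℝ}
    (h : needleEquilibrium n (extCfg n a)) : IsMinOn (needleOmega n) (needleU n) a := by
  intro b hb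
  have htangent := pairEnergy_sub_sum_mul_coulombForce_le (x := extCfg n a) hb
  have hforce := (needleEquilibrium_extCfg_iff hn h.1).1 h
  have hzero : ∑ i, (extCfg n b i - extCfg n a i) * coulombForce (extCfg n a) i = 0 := by
    refine sum_eq_zero fun i _ => ?_
    by_cases h0 : i.val = 0
    · simp [extCfg_of_val_eq_zero _ h0]
    by_cases h1 : i.val = n - 1
    · simp [extCfg_of_val_eq_sub_one hn _ h1]
    · rw [hforce i (by omega) (by omega), mul_zero]
  rwa [hzero, sub_zero] at htangent

theorem equilibrium_of_isMinOn_needleOmega (hn : 2 ≤ n) {a : Fin (n - 2) → ℝ}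
    (ha : a ∈ needleU n) (hmin : IsMinOn (needleOmega n) (needleU n) a) :
    needleEquilibrium n (extCfg n a) := by
  refine (needleEquilibrium_extCfg_iff hn ha).2 fun i hi1 hi2 => ?_
  set im : Fin (n - 2) := ⟨i.val - 1, by omega⟩
  set line : ℝ → Fin (n - 2) → ℝ := fun t => a + t • Pi.single im 1
  have hline : Continuous line := by fun_prop
  have hloc : IsLocalMin (needleOmega n ∘ line) 0 := by
    refine IsLocalMin.comp_continuous ?_ hline.continuousAt
    simpa [line] using hmin.isLocalMin (isOpen_needleU.mem_nhds ha)
  have hderiv := hasDerivAt_pairEnergy_add_smul ha (Pi.single i 1)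
  have him : (⟨im.val + 1, by omega⟩ : Fin n) = i := Fin.ext (by simp [im]; omega)
  have hcomp : needleOmega n ∘ line = fun t => pairEnergy (extCfg n a + t • Pi.single i 1) := by
    funext t
    simp only [Function.comp, line, needleOmega_eq_pairEnergy, extCfg_add_smul_single, him]
  rw [← hcomp] at hderiv
  simpa [Pi.single_apply] using hloc.hasDerivAt_eq_zero hderiv

theorem needleU_subset_Icc : needleU n ⊆ Set.Icc 0 1 := by
  intro a ha
  refine ⟨fun i => ?_, fun i => ?_⟩ <;> have := i.isLt <;> rw [← extCfg_succ a i]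
  · exact (extCfg_of_val_eq_zero a (i := ⟨0, by omega⟩) rfl).symm.trans_le
      (ha.monotone (Fin.mk_le_mk.2 (Nat.zero_le _)))
  · exact (ha.monotone (Fin.mk_le_mk.2 (by omega))).trans
      (extCfg_of_val_eq_sub_one (by omega) a (i := ⟨n - 1, by omega⟩) rfl).le

def needleGapSet (n : ℕ) (ε : ℝ) : Set (Fin (n - 2) → ℝ) :=
  {a | ∀ j k : Fin n, j < k → ε ≤ extCfg n a k - extCfg n a j}

theorem needleGapSet_subset_needleU {ε : ℝ} (hε : 0 < ε) : needleGapSet n ε ⊆ needleU n :=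
  fun _ ha _ _ hjk => sub_pos.1 (hε.trans_le (ha _ _ hjk))

theorem isCompact_needleGapSet {ε : ℝ} (hε : 0 < ε) : IsCompact (needleGapSet n ε) := by
  have hclosed : IsClosed (needleGapSet n ε) := by
    simp only [needleGapSet, Set.ofPred_forall]
    exact isClosed_iInter fun j => isClosed_iInter fun k => isClosed_iInter fun _ =>
      isClosed_le continuous_const
        (((continuous_apply k).comp continuous_extCfg).sub
          ((continuous_apply j).comp continuous_extCfg))
  exact isCompact_Icc.of_isClosed_subset hclosed
    ((needleGapSet_subset_needleU hε).trans needleU_subset_Icc)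

theorem mem_needleGapSet_of_needleOmega_lt {a : Fin (n - 2) → ℝ} {M : ℝ} (ha : a ∈ needleU n)
    (hM : needleOmega n a < M) : a ∈ needleGapSet n M⁻¹ := fun j k hjk => by
  have hinv_lt : (extCfg n a k - extCfg n a j)⁻¹ < M := by
    simpa only [one_div] using (one_div_le_pairEnergy ha hjk).trans_lt hM
  exact (inv_lt_of_inv_lt₀ (sub_pos.2 (ha hjk)) hinv_lt).le

theorem continuousOn_needleOmega : ContinuousOn (needleOmega n) (needleU n) := by
  refine continuousOn_finsetSum _ fun p hp => continuousOn_const.div ?_ fun a ha => ?_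
  · exact (((continuous_apply p.2).comp continuous_extCfg).sub
      ((continuous_apply p.1).comp continuous_extCfg)).continuousOn
  · exact (sub_pos.2 (ha (mem_filter.1 hp).2)).ne'

theorem extCfg_equispaced (i : Fin n) :
    extCfg n (fun m => ((m.val : ℝ) + 1) / (n - 1)) i = i.val / (n - 1) := by
  unfold extCfg
  split_ifs with h0 h1
  · simp [h0]
  · rw [h1, Nat.cast_sub (by omega), Nat.cast_one, div_self]
    have hn : (2 : ℝ) ≤ n := by exact_mod_cast (show 2 ≤ n by omega)
    linarith
  · simp [Nat.cast_sub (show 1 ≤ i.val by omega)]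

theorem needleU_nonempty : (needleU n).Nonempty := by
  refine ⟨fun m => ((m.val : ℝ) + 1) / (n - 1), fun j k hjk => ?_⟩
  rw [extCfg_equispaced, extCfg_equispaced]
  have hn : (1 : ℝ) < n := by exact_mod_cast (show 1 < n by omega)
  gcongr
  exact_mod_cast hjk

theorem exists_isMinOn_needleOmega : ∃ a ∈ needleU n, IsMinOn (needleOmega n) (needleU n) a := by
  obtain ⟨a₀, ha₀⟩ := needleU_nonempty (n := n)
  set M := needleOmega n a₀ + 1
  have hM : 0 < M := add_pos_of_nonneg_of_pos (pairEnergy_nonneg ha₀) one_pos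
  have ha₀K : a₀ ∈ needleGapSet n M⁻¹ := mem_needleGapSet_of_needleOmega_lt ha₀ (lt_add_one _)
  obtain ⟨a, haK, hmin⟩ := (isCompact_needleGapSet (inv_pos.2 hM)).exists_isMinOn ⟨a₀, ha₀K⟩
    (continuousOn_needleOmega.mono (needleGapSet_subset_needleU (inv_pos.2 hM)))
  refine ⟨a, needleGapSet_subset_needleU (inv_pos.2 hM) haK, fun b hb => ?_⟩
  by_cases hbM : needleOmega n b < M
  · exact hmin (mem_needleGapSet_of_needleOmega_lt hb hbM)
  · exact (isMinOn_iff.1 hmin _ ha₀K).trans (by linarith [not_lt.1 hbM])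

end Needle

/-- The configuration of `n` charges at equilibrium on the needle `[0,1]` is the unique
minimizer of `ω`: a point `a ∈ U_{n-2}` minimizes `ω` over `U_{n-2}` if and only if the
extended configuration `(0, a_2, …, a_{n-1}, 1)` is an equilibrium configuration, and
there is exactly one such point. -/
theorem needleOmega_min_iff_equilibrium (n : ℕ) (hn : 4 ≤ n) :
    (∀ a ∈ needleU n,
        ((∀ b ∈ needleU n, needleOmega n a ≤ needleOmega n b) ↔
          needleEquilibrium n (extCfg n a))) ∧
      ∃! a : Fin (n - 2) → ℝ,
        a ∈ needleU n ∧ ∀ b ∈ needleU n, needleOmega n a ≤ needleOmega n b := by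
  obtain ⟨a, ha, hmin⟩ := exists_isMinOn_needleOmega (n := n)
  refine ⟨fun b hb => ⟨equilibrium_of_isMinOn_needleOmega (by omega) hb,
    isMinOn_needleOmega_of_equilibrium (by omega)⟩, a, ⟨ha, hmin⟩, ?_⟩
  rintro b ⟨hb, hbmin⟩
  exact strictConvexOn_needleOmega.eq_of_isMinOn hbmin hmin hb ha
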